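/- The operations on parking quasi-ribbons defined by α ≺ β = α · β[max(α)-1], α ∘ β = α | β[|α|], α ≻ β = α · β[|α|] (where β[k] shifts all letters of β by k, · is concatenation, and | inserts a bar) satisfy the seven triduplicial relations: (x≺y)≺z = x≺(y≺z), (x∘y)∘z = x∘(y∘z), (x≻y)≻z = x≻(y≻z), (x≻y)≺z = x≻(y≺z), (x∘y)≺z = x∘(y≺z), (x≻y)∘z = x≻(y∘z), (x∘y)≻z = x∘(y≻z). -/

import Mathlib

noncomputable section

/-- A parking quasi-ribbon is represented as its list of blocks (the bars separate
consecutive blocks). -/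
abbrev PQ := List (List ℕ)

/-- The underlying word (concatenation of the blocks). -/
def wrd : PQ → List ℕ
  | [] => []
  | b :: bs => b ++ wrd bs

/-- The length `|α|` of a parking quasi-ribbon. -/
def lenw (x : PQ) : ℕ := (wrd x).length

/-- The maximal letter `max(α)`. -/
def maxw (x : PQ) : ℕ := (wrd x).foldr max 0

/-- `α[k]`: shift all letters by `k`. -/
def shiftPQ (k : ℕ) (x : PQ) : PQ := x.map (List.map (· + k))

/-- Barless concatenation `α · β` (the last block of `α` is merged with the first block
of `β`). -/
def catPQ : PQ → PQ → PQ
  | [], y => y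
  | [b], [] => [b]
  | [b], c :: cs => (b ++ c) :: cs
  | b :: bs, y => b :: catPQ bs y

/-- `α ≺ β = α · β[max(α) - 1]`. -/
def precPQ (x y : PQ) : PQ := catPQ x (shiftPQ (maxw x - 1) y)

/-- `α ∘ β = α | β[|α|]` (bar inserted). -/
def circPQ (x y : PQ) : PQ := x ++ shiftPQ (lenw x) y

/-- `α ≻ β = α · β[|α|]`. -/
def succPQ (x y : PQ) : PQ := catPQ x (shiftPQ (lenw x) y)

/-- Validity: a nonempty parking quasi-ribbon (nonempty blocks, nondecreasing underlying
word which is a parking function, bars only between strictly different values). -/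
def IsPQR (x : PQ) : Prop :=
  x ≠ [] ∧ (∀ b ∈ x, b ≠ []) ∧ List.Pairwise (· ≤ ·) (wrd x) ∧
    (∀ i, i < lenw x → 1 ≤ (wrd x).getD i 0 ∧ (wrd x).getD i 0 ≤ i + 1) ∧
    List.Chain' (fun b c => b.getLastD 0 < c.headD 0) x

/-!
All seven relations reduce to two facts about the underlying operations: barless
concatenation `·` and bar concatenation `|` are associative and associate with each other
(when the middle factor is nonempty), and shifting is additive and distributes over both.
What remains is to compare the shifts on both sides. For `≻` and `∘` these are lengths, which
add up. For `≺` the shift is `max - 1`, and the maximum is additive in the same way: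
`max(α ≺ β) = max(β) + max(α) - 1` and `max(α ≻ β) = max(α ∘ β) = max(β) + |α|`, because the
letters of the shifted right factor dominate those of `α` as soon as `max(β) ≥ 1` and
`max(α) ≤ |α|`, both of which hold for parking quasi-ribbons.
-/

theorem wrd_eq_flatten (x : PQ) : wrd x = x.flatten := by
  induction x <;> simp [wrd, *]

theorem wrd_append (x y : PQ) : wrd (x ++ y) = wrd x ++ wrd y := by
  simp [wrd_eq_flatten]

theorem wrd_shiftPQ (k : ℕ) (x : PQ) : wrd (shiftPQ k x) = (wrd x).map (· + k) := by
  simp [wrd_eq_flatten, shiftPQ, List.map_flatten]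

theorem shiftPQ_cons (k : ℕ) (b : List ℕ) (x : PQ) :
    shiftPQ k (b :: x) = b.map (· + k) :: shiftPQ k x :=
  rfl

theorem shiftPQ_append (k : ℕ) (x y : PQ) :
    shiftPQ k (x ++ y) = shiftPQ k x ++ shiftPQ k y := by
  simp [shiftPQ]

theorem shiftPQ_shiftPQ (k l : ℕ) (x : PQ) : shiftPQ k (shiftPQ l x) = shiftPQ (k + l) x := by
  simp [shiftPQ, Function.comp_def, Nat.add_assoc, Nat.add_comm l]

theorem shiftPQ_ne_nil {x : PQ} (k : ℕ) (hx : x ≠ []) : shiftPQ k x ≠ [] := by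
  simpa [shiftPQ] using hx

theorem catPQ_cons_of_ne_nil (b : List ℕ) {t : PQ} (ht : t ≠ []) (y : PQ) :
    catPQ (b :: t) y = b :: catPQ t y := by
  obtain ⟨c, cs, rfl⟩ := List.exists_cons_of_ne_nil ht
  rfl

theorem wrd_catPQ : ∀ x y : PQ, wrd (catPQ x y) = wrd x ++ wrd y
  | [], _ | [_], [] | [_], _ :: _ => by simp [catPQ, wrd]
  | b :: b' :: bs, y => by simp [catPQ, wrd, wrd_catPQ (b' :: bs) y]

theorem catPQ_ne_nil : ∀ {x : PQ}, x ≠ [] → ∀ y : PQ, catPQ x y ≠ []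
  | [_], _, [] | [_], _, _ :: _ | _ :: _ :: _, _, _ => by simp [catPQ]

theorem catPQ_assoc : ∀ x y z : PQ, catPQ (catPQ x y) z = catPQ x (catPQ y z)
  | [], _, _ => rfl
  | [_], [], z | [_], [_], z => by cases z <;> simp [catPQ]
  | [b], c :: c' :: cs, z => by simp [catPQ, catPQ_cons_of_ne_nil]
  | b :: b' :: bs, y, z => by
    rw [catPQ_cons_of_ne_nil b (List.cons_ne_nil b' bs),
      catPQ_cons_of_ne_nil b (catPQ_ne_nil (List.cons_ne_nil b' bs) y), catPQ_assoc (b' :: bs),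
      catPQ_cons_of_ne_nil b (List.cons_ne_nil b' bs)]

theorem shiftPQ_catPQ (k : ℕ) :
    ∀ x y : PQ, shiftPQ k (catPQ x y) = catPQ (shiftPQ k x) (shiftPQ k y)
  | [], _ | [_], [] | [_], _ :: _ => by simp [catPQ, shiftPQ]
  | b :: b' :: bs, y => by
    rw [catPQ_cons_of_ne_nil b (List.cons_ne_nil b' bs), shiftPQ_cons, shiftPQ_cons,
      shiftPQ_catPQ k (b' :: bs) y,
      catPQ_cons_of_ne_nil _ (shiftPQ_ne_nil k (List.cons_ne_nil b' bs))]

theorem append_catPQ_assoc (x : PQ) {y : PQ} (hy : y ≠ []) (w : PQ) :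
    catPQ (x ++ y) w = x ++ catPQ y w := by
  induction x with
  | nil => rfl
  | cons b bs ih => rw [List.cons_append, catPQ_cons_of_ne_nil b (by simp [hy]), ih,
      List.cons_append]

theorem catPQ_append_assoc : ∀ (x : PQ) {u : PQ}, u ≠ [] → ∀ v : PQ,
    catPQ x (u ++ v) = catPQ x u ++ v
  | [], _, _, _ | [_], _ :: _, _, _ => rfl
  | b :: b' :: bs, u, hu, v => by
    rw [catPQ_cons_of_ne_nil b (List.cons_ne_nil b' bs),
      catPQ_cons_of_ne_nil b (List.cons_ne_nil b' bs), catPQ_append_assoc (b' :: bs) hu v,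
      List.cons_append]

theorem lenw_catPQ (x y : PQ) : lenw (catPQ x y) = lenw x + lenw y := by
  simp [lenw, wrd_catPQ]

theorem lenw_append (x y : PQ) : lenw (x ++ y) = lenw x + lenw y := by
  simp [lenw, wrd_append]

theorem lenw_shiftPQ (k : ℕ) (x : PQ) : lenw (shiftPQ k x) = lenw x := by
  simp [lenw, wrd_shiftPQ]

theorem List.foldr_max_zero_append (l m : List ℕ) :
    (l ++ m).foldr max 0 = max (l.foldr max 0) (m.foldr max 0) := by
  induction l with
  | nil => simp
  | cons a l ih => simp [ih, max_assoc]

theorem List.foldr_max_zero_map_add (k : ℕ) {l : List ℕ} (hl : l ≠ []) :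
    (l.map (· + k)).foldr max 0 = l.foldr max 0 + k := by
  induction l with
  | nil => exact absurd rfl hl
  | cons a l ih =>
    rcases eq_or_ne l [] with rfl | hl'
    · simp
    · simp [ih hl', max_add_add_right]

theorem maxw_catPQ (x y : PQ) : maxw (catPQ x y) = max (maxw x) (maxw y) := by
  simp only [maxw, wrd_catPQ, List.foldr_max_zero_append]

theorem maxw_append (x y : PQ) : maxw (x ++ y) = max (maxw x) (maxw y) := by
  simp only [maxw, wrd_append, List.foldr_max_zero_append]

theorem maxw_shiftPQ (k : ℕ) {x : PQ} (hx : wrd x ≠ []) : maxw (shiftPQ k x) = maxw x + k := by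
  simp only [maxw, wrd_shiftPQ, List.foldr_max_zero_map_add k hx]

theorem wrd_ne_nil_of_one_le_maxw {x : PQ} (hx : 1 ≤ maxw x) : wrd x ≠ [] := by
  rintro h
  simp [maxw, h] at hx

theorem ne_nil_of_one_le_maxw {x : PQ} (hx : 1 ≤ maxw x) : x ≠ [] := by
  rintro rfl
  exact wrd_ne_nil_of_one_le_maxw hx rfl

theorem maxw_precPQ (x : PQ) {y : PQ} (hy : 1 ≤ maxw y) :
    maxw (precPQ x y) = maxw x - 1 + maxw y := by
  rw [precPQ, maxw_catPQ, maxw_shiftPQ _ (wrd_ne_nil_of_one_le_maxw hy)]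
  omega

theorem maxw_succPQ {x y : PQ} (hx : maxw x ≤ lenw x) (hy : wrd y ≠ []) :
    maxw (succPQ x y) = lenw x + maxw y := by
  rw [succPQ, maxw_catPQ, maxw_shiftPQ _ hy]
  omega

theorem maxw_circPQ {x y : PQ} (hx : maxw x ≤ lenw x) (hy : wrd y ≠ []) :
    maxw (circPQ x y) = lenw x + maxw y := by
  rw [circPQ, maxw_append, maxw_shiftPQ _ hy]
  omega

theorem precPQ_assoc (x : PQ) {y : PQ} (hy : 1 ≤ maxw y) (z : PQ) :
    precPQ (precPQ x y) z = precPQ x (precPQ y z) := by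
  rw [precPQ.eq_1 (precPQ x y), maxw_precPQ x hy, Nat.add_sub_assoc hy]
  simp only [precPQ, shiftPQ_catPQ, shiftPQ_shiftPQ, catPQ_assoc]

theorem circPQ_assoc (x y z : PQ) : circPQ (circPQ x y) z = circPQ x (circPQ y z) := by
  simp only [circPQ, lenw_append, lenw_shiftPQ, shiftPQ_append, shiftPQ_shiftPQ,
    List.append_assoc]

theorem succPQ_assoc (x y z : PQ) : succPQ (succPQ x y) z = succPQ x (succPQ y z) := by
  simp only [succPQ, lenw_catPQ, lenw_shiftPQ, shiftPQ_catPQ, shiftPQ_shiftPQ, catPQ_assoc]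

theorem precPQ_succPQ {x y : PQ} (hx : maxw x ≤ lenw x) (hy : 1 ≤ maxw y) (z : PQ) :
    precPQ (succPQ x y) z = succPQ x (precPQ y z) := by
  rw [precPQ.eq_1 (succPQ x y), maxw_succPQ hx (wrd_ne_nil_of_one_le_maxw hy),
    Nat.add_sub_assoc hy]
  simp only [precPQ, succPQ, shiftPQ_catPQ, shiftPQ_shiftPQ, catPQ_assoc]

theorem precPQ_circPQ {x y : PQ} (hx : maxw x ≤ lenw x) (hy : 1 ≤ maxw y) (z : PQ) :
    precPQ (circPQ x y) z = circPQ x (precPQ y z) := by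
  rw [precPQ.eq_1 (circPQ x y), maxw_circPQ hx (wrd_ne_nil_of_one_le_maxw hy),
    Nat.add_sub_assoc hy]
  simp only [precPQ, circPQ, shiftPQ_catPQ, shiftPQ_shiftPQ]
  rw [append_catPQ_assoc _ (shiftPQ_ne_nil _ (ne_nil_of_one_le_maxw hy))]

theorem circPQ_succPQ (x : PQ) {y : PQ} (hy : y ≠ []) (z : PQ) :
    circPQ (succPQ x y) z = succPQ x (circPQ y z) := by
  simp only [circPQ, succPQ, lenw_catPQ, lenw_shiftPQ, shiftPQ_append, shiftPQ_shiftPQ]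
  rw [catPQ_append_assoc _ (shiftPQ_ne_nil _ hy)]

theorem succPQ_circPQ (x : PQ) {y : PQ} (hy : y ≠ []) (z : PQ) :
    succPQ (circPQ x y) z = circPQ x (succPQ y z) := by
  simp only [circPQ, succPQ, lenw_append, lenw_shiftPQ, shiftPQ_catPQ, shiftPQ_shiftPQ]
  rw [append_catPQ_assoc _ (shiftPQ_ne_nil _ hy)]

theorem IsPQR.one_le_maxw {x : PQ} (h : IsPQR x) : 1 ≤ maxw x := by
  obtain ⟨hne, hblocks, -, hparking, -⟩ := h
  obtain ⟨b, bs, rfl⟩ := List.exists_cons_of_ne_nil hne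
  obtain ⟨a, as, hb⟩ := List.exists_cons_of_ne_nil (hblocks b List.mem_cons_self)
  have hlen : 0 < lenw (b :: bs) := by simp [lenw, wrd, hb]
  have ha : 1 ≤ a := by simpa [wrd, hb] using (hparking 0 hlen).1
  exact List.le_max_of_le (by simp [wrd, hb]) ha

theorem IsPQR.maxw_le_lenw {x : PQ} (h : IsPQR x) : maxw x ≤ lenw x := by
  obtain ⟨-, -, -, hparking, -⟩ := h
  refine List.max_le_of_forall_le _ _ fun a ha => ?_
  obtain ⟨i, hi, rfl⟩ := List.mem_iff_getElem.mp ha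
  have hle := (hparking i hi).2
  rw [List.getD_eq_getElem _ _ hi] at hle
  exact hle.trans hi

theorem triduplicial_relations_general (x y z : PQ)
    (hx : IsPQR x) (hy : IsPQR y) :
    precPQ (precPQ x y) z = precPQ x (precPQ y z) ∧
    circPQ (circPQ x y) z = circPQ x (circPQ y z) ∧
    succPQ (succPQ x y) z = succPQ x (succPQ y z) ∧
    precPQ (succPQ x y) z = succPQ x (precPQ y z) ∧
    precPQ (circPQ x y) z = circPQ x (precPQ y z) ∧
    circPQ (succPQ x y) z = succPQ x (circPQ y z) ∧
    succPQ (circPQ x y) z = circPQ x (succPQ y z) :=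
  ⟨precPQ_assoc x hy.one_le_maxw z, circPQ_assoc x y z, succPQ_assoc x y z,
    precPQ_succPQ hx.maxw_le_lenw hy.one_le_maxw z, precPQ_circPQ hx.maxw_le_lenw hy.one_le_maxw z,
    circPQ_succPQ x hy.1 z, succPQ_circPQ x hy.1 z⟩

/-- **The seven triduplicial relations** hold for the operations `≺`, `∘`, `≻` on
(nonempty) parking quasi-ribbons. -/
theorem triduplicial_relations (x y z : PQ)
    (hx : IsPQR x) (hy : IsPQR y) (hz : IsPQR z) :
    precPQ (precPQ x y) z = precPQ x (precPQ y z) ∧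
    circPQ (circPQ x y) z = circPQ x (circPQ y z) ∧
    succPQ (succPQ x y) z = succPQ x (succPQ y z) ∧
    precPQ (succPQ x y) z = succPQ x (precPQ y z) ∧
    precPQ (circPQ x y) z = circPQ x (precPQ y z) ∧
    circPQ (succPQ x y) z = succPQ x (circPQ y z) ∧
    succPQ (circPQ x y) z = circPQ x (succPQ y z) :=
  triduplicial_relations_general x y z hx hy
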